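/- arXiv:2405.04475 — 3 statements merged into one kernel-verified Lean document; each statement's English description precedes it below -/
import Mathlib

section
/- If g : [0,1]^d → ℝ is α-Hölder continuous with constant L and exponent α ∈ (0,1], then for any k = (k1,...,kd) with k = min_j kj, the Bernstein-type approximation error satisfies ‖g − Σ_ν g(ν1/k1,...,νd/kd)·∏_j P_{νj,kj}‖_∞ ≤ d·L·(1/(2k) + 1/k²)^{α/2} in sup norm over [0,1]^d, where P_{ν,k}(z) = binom(k,ν) z^ν (1-z)^{k-ν}. -/
/-!
The product Bernstein weights `W ν = ∏ⱼ P_{νⱼ,kⱼ}(zⱼ)` are nonnegative and sum to one, so the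
error at `z` is at most `∑ ν W ν |g z - g (ν/k)|`. Since `‖·‖₂ ≤ ‖·‖₁` and `t ↦ t ^ α` is
subadditive, the Hölder bound splits into `L ∑ⱼ |zⱼ - νⱼ/kⱼ| ^ α`, and each coordinate only sees
its one-dimensional marginal. There, Jensen's inequality for the concave `t ↦ t ^ (α/2)` and the
Bernstein variance `z(1-z)/kⱼ ≤ 1/(4k)` bound the `α`-th absolute moment by `(1/(4k)) ^ (α/2)`.
-/

open Finset unitInterval

theorem Real.rpow_sum_le_sum_rpow {ι : Type*} (s : Finset ι) {f : ι → ℝ}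
    (hf : ∀ i ∈ s, 0 ≤ f i) {p : ℝ} (hp0 : 0 < p) (hp1 : p ≤ 1) :
    (∑ i ∈ s, f i) ^ p ≤ ∑ i ∈ s, f i ^ p := by
  induction s using Finset.cons_induction with
  | empty => simp [Real.zero_rpow hp0.ne']
  | cons a s ha ih =>
    rw [sum_cons, sum_cons]
    have hs := (forall_mem_cons ha _).mp hf
    calc (f a + ∑ i ∈ s, f i) ^ p ≤ f a ^ p + (∑ i ∈ s, f i) ^ p :=
          Real.rpow_add_le_add_rpow hs.1 (sum_nonneg hs.2) hp0.le hp1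
      _ ≤ f a ^ p + ∑ i ∈ s, f i ^ p := add_le_add le_rfl (ih hs.2)

theorem Real.sqrt_sum_sq_rpow_le_sum_abs_rpow {ι : Type*} (s : Finset ι) (a : ι → ℝ)
    {α : ℝ} (hα0 : 0 < α) (hα1 : α ≤ 1) :
    √(∑ i ∈ s, a i ^ 2) ^ α ≤ ∑ i ∈ s, |a i| ^ α := by
  have hl2_le_l1 : √(∑ i ∈ s, a i ^ 2) ≤ ∑ i ∈ s, |a i| := by
    rw [Real.sqrt_le_iff]
    refine ⟨sum_nonneg fun i _ => abs_nonneg _, ?_⟩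
    simpa only [sq_abs] using sum_sq_le_sq_sum_of_nonneg fun i _ => abs_nonneg (a i)
  calc √(∑ i ∈ s, a i ^ 2) ^ α ≤ (∑ i ∈ s, |a i|) ^ α :=
        Real.rpow_le_rpow (Real.sqrt_nonneg _) hl2_le_l1 hα0.le
    _ ≤ ∑ i ∈ s, |a i| ^ α :=
        Real.rpow_sum_le_sum_rpow s (fun i _ => abs_nonneg _) hα0 hα1

theorem abs_sub_sum_mul_le_sum_abs_sub_mul {ι : Type*} (s : Finset ι) {w : ι → ℝ}
    (hw0 : ∀ i ∈ s, 0 ≤ w i) (hw1 : ∑ i ∈ s, w i = 1) (c : ℝ) (a : ι → ℝ) :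
    |c - ∑ i ∈ s, a i * w i| ≤ ∑ i ∈ s, |c - a i| * w i := by
  have hsplit : c - ∑ i ∈ s, a i * w i = ∑ i ∈ s, (c - a i) * w i := by
    simp only [sub_mul, sum_sub_distrib, ← mul_sum, hw1, mul_one]
  rw [hsplit]
  refine (abs_sum_le_sum_abs _ _).trans_eq (sum_congr rfl fun i hi => ?_)
  rw [abs_mul, abs_of_nonneg (hw0 i hi)]

theorem sum_prod_mul_apply {ι : Type*} [Fintype ι] [DecidableEq ι] {κ : ι → Type*}
    [∀ i, Fintype (κ i)] {R : Type*} [CommSemiring R] {w : ∀ i, κ i → R}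
    (hw : ∀ i, ∑ a, w i a = 1) (j : ι) (f : κ j → R) :
    ∑ x : ∀ i, κ i, (∏ i, w i (x i)) * f (x j) = ∑ a, w j a * f a := by
  set u := Function.update w j fun a => w j a * f a
  have hu : ∀ x : ∀ i, κ i, (∏ i, w i (x i)) * f (x j) = ∏ i, u i (x i) := by
    intro x
    have hrest : ∏ i ∈ univ.erase j, u i (x i) = ∏ i ∈ univ.erase j, w i (x i) :=
      prod_congr rfl fun i hi => by simp only [u, Function.update_of_ne (ne_of_mem_erase hi)]
    rw [← mul_prod_erase univ _ (mem_univ j), ← mul_prod_erase univ (fun i => u i (x i))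
      (mem_univ j), hrest]
    simp only [u, Function.update_self]
    ring
  rw [sum_congr rfl fun x _ => hu x, ← Fintype.prod_sum,
    prod_eq_single j (fun i _ hi => by simp only [u, Function.update_of_ne hi, hw]) (by simp)]
  simp only [u, Function.update_self]

theorem sum_prod_mul_sum_apply {ι : Type*} [Fintype ι] [DecidableEq ι] {κ : ι → Type*}
    [∀ i, Fintype (κ i)] {R : Type*} [CommSemiring R] {w : ∀ i, κ i → R}
    (hw : ∀ i, ∑ a, w i a = 1) (f : ∀ i, κ i → R) :
    ∑ x : ∀ i, κ i, (∏ i, w i (x i)) * ∑ i, f i (x i) = ∑ i, ∑ a, w i a * f i a := by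
  simp only [mul_sum]
  rw [sum_comm]
  exact sum_congr rfl fun i _ => sum_prod_mul_apply hw i (f i)

theorem bernstein.sum_mul_abs_sub_rpow_le {n : ℕ} (hn : n ≠ 0) (x : I) {α : ℝ}
    (hα0 : 0 ≤ α) (hα1 : α ≤ 2) :
    ∑ ν : Fin (n + 1), bernstein n ν x * |(x : ℝ) - ν / n| ^ α
      ≤ (x * (1 - x) / n) ^ (α / 2) := by
  have habs : ∀ t : ℝ, |t| ^ α = (t ^ 2) ^ (α / 2) := fun t => by
    rw [← sq_abs, ← Real.rpow_natCast_mul (abs_nonneg t)]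
    ring_nf
  have hjensen := (Real.concaveOn_rpow (by linarith : 0 ≤ α / 2) (by linarith)).le_map_sum
    (t := univ) (w := fun ν : Fin (n + 1) => bernstein n ν x)
    (p := fun ν => ((x : ℝ) - ν / n) ^ 2) (fun ν _ => bernstein_nonneg)
    (bernstein.probability n x) (fun ν _ => Set.mem_Ici.mpr (sq_nonneg _))
  simp only [smul_eq_mul, ← habs] at hjensen
  refine hjensen.trans_eq ?_
  rw [← bernstein.variance hn x]
  exact congrArg (· ^ (α / 2)) (sum_congr rfl fun ν _ => mul_comm _ _)

theorem abs_sub_sum_mul_prod_bernstein_le {ι : Type*} [Fintype ι] [DecidableEq ι]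
    (n : ι → ℕ) (x : ι → I) {g : (ι → ℝ) → ℝ} {L α : ℝ}
    (hg : ∀ y ∈ Set.Icc (0 : ι → ℝ) 1,
      |g (fun i => x i) - g y| ≤ L * ∑ i, |(x i : ℝ) - y i| ^ α) :
    |g (fun i => x i) - ∑ ν : ∀ i, Fin (n i + 1),
        g (fun i => (ν i : ℝ) / n i) * ∏ i, bernstein (n i) (ν i) (x i)|
      ≤ L * ∑ i, ∑ a : Fin (n i + 1),
          bernstein (n i) a (x i) * |(x i : ℝ) - a / n i| ^ α := by
  set w : ∀ i, Fin (n i + 1) → ℝ := fun i a => bernstein (n i) a (x i)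
  have hw1 : ∀ i, ∑ a, w i a = 1 := fun i => bernstein.probability _ (x i)
  have hW0 : ∀ ν : ∀ i, Fin (n i + 1), 0 ≤ ∏ i, w i (ν i) :=
    fun ν => prod_nonneg fun i _ => bernstein_nonneg
  have hW1 : ∑ ν : ∀ i, Fin (n i + 1), ∏ i, w i (ν i) = 1 := by
    rw [← Fintype.prod_sum, prod_congr rfl fun i _ => hw1 i, prod_const_one]
  have hgrid : ∀ ν : ∀ i, Fin (n i + 1),
      (fun i => (ν i : ℝ) / n i) ∈ Set.Icc (0 : ι → ℝ) 1 :=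
    fun ν => ⟨fun i => (bernstein.z (ν i)).2.1, fun i => (bernstein.z (ν i)).2.2⟩
  refine (abs_sub_sum_mul_le_sum_abs_sub_mul univ (fun ν _ => hW0 ν) hW1 _ _).trans ?_
  rw [← sum_prod_mul_sum_apply hw1, mul_sum]
  refine sum_le_sum fun ν _ => ?_
  rw [mul_comm, mul_left_comm]
  exact mul_le_mul_of_nonneg_left (hg _ (hgrid ν)) (hW0 ν)

theorem mul_one_sub_div_le_inv_two_mul_add_inv_sq (x : ℝ) {n k : ℕ} (hk : 0 < k)
    (hkn : k ≤ n) :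
    x * (1 - x) / n ≤ 1 / (2 * k) + 1 / (k : ℝ) ^ 2 := by
  have hk' : (0 : ℝ) < k := by exact_mod_cast hk
  have hkn' : (k : ℝ) ≤ n := by exact_mod_cast hkn
  calc x * (1 - x) / n ≤ 1 / 4 / k :=
        div_le_div₀ (by norm_num) (by nlinarith [sq_nonneg (x - 1 / 2)]) hk' hkn'
    _ ≤ 1 / (2 * k) + 1 / (k : ℝ) ^ 2 := by
        have hquarter : 1 / 4 / (k : ℝ) ≤ 1 / (2 * k) := by
          rw [div_div, one_div_le_one_div (by positivity) (by positivity)]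
          linarith
        linarith [show (0 : ℝ) ≤ 1 / (k : ℝ) ^ 2 by positivity]

theorem bernstein_holder_rate_general (d : ℕ)
    (g : (Fin d → ℝ) → ℝ) (L : ℝ) (hL : 0 ≤ L) (α : ℝ) (hα0 : 0 < α) (hα1 : α ≤ 1)
    (hHolder : ∀ x ∈ Set.Icc (0 : Fin d → ℝ) 1, ∀ y ∈ Set.Icc (0 : Fin d → ℝ) 1,
      |g x - g y| ≤ L * (Real.sqrt (∑ j, (x j - y j) ^ 2)) ^ α)
    (kv : Fin d → ℕ) (k : ℕ) (hk1 : 1 ≤ k)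
    (hkmin : ∀ j, k ≤ kv j) :
    ∀ z ∈ Set.Icc (0 : Fin d → ℝ) 1,
      |g z - ∑ ν : (∀ j, Fin (kv j + 1)),
          g (fun j => (ν j : ℝ) / (kv j : ℝ)) *
            ∏ j, ((kv j).choose (ν j) : ℝ) * z j ^ (ν j : ℕ) *
              (1 - z j) ^ (kv j - (ν j : ℕ))|
        ≤ d * L * (1 / (2 * k) + 1 / (k : ℝ) ^ 2) ^ (α / 2) := by
  intro z hz
  set x : Fin d → I := fun j => ⟨z j, hz.1 j, hz.2 j⟩
  set B : ℝ := 1 / (2 * k) + 1 / (k : ℝ) ^ 2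
  have hweights : ∀ ν : ∀ j, Fin (kv j + 1), ∏ j, ((kv j).choose (ν j) : ℝ) * z j ^ (ν j : ℕ) *
      (1 - z j) ^ (kv j - (ν j : ℕ)) = ∏ j, bernstein (kv j) (ν j) (x j) := fun ν => by
    simp only [bernstein_apply, x]
  have hcoord : ∀ j, ∑ a : Fin (kv j + 1), bernstein (kv j) a (x j) * |z j - a / kv j| ^ α
      ≤ B ^ (α / 2) := by
    intro j
    have hvar_nonneg : 0 ≤ z j * (1 - z j) / kv j :=
      div_nonneg (mul_nonneg (x j).2.1 (one_minus_nonneg (x j))) (Nat.cast_nonneg _)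
    calc _ ≤ (z j * (1 - z j) / kv j) ^ (α / 2) :=
          bernstein.sum_mul_abs_sub_rpow_le (by have := hkmin j; omega) (x j) hα0.le (by linarith)
      _ ≤ B ^ (α / 2) := Real.rpow_le_rpow hvar_nonneg
          (mul_one_sub_div_le_inv_two_mul_add_inv_sq _ hk1 (hkmin j)) (by linarith)
  simp only [hweights]
  calc _ ≤ L * ∑ j, ∑ a : Fin (kv j + 1), bernstein (kv j) a (x j) * |z j - a / kv j| ^ α :=
        abs_sub_sum_mul_prod_bernstein_le kv x fun y hy => (hHolder z hz y hy).trans <|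
          mul_le_mul_of_nonneg_left (Real.sqrt_sum_sq_rpow_le_sum_abs_rpow _ _ hα0 hα1) hL
    _ ≤ L * ∑ _j : Fin d, B ^ (α / 2) := by gcongr with j; exact hcoord j
    _ = d * L * B ^ (α / 2) := by
        rw [sum_const, card_univ, Fintype.card_fin, nsmul_eq_mul]
        ring

/-- Bernstein approximation rate for α-Hölder functions. -/
theorem bernstein_holder_rate (d : ℕ) (hd : 0 < d)
    (g : (Fin d → ℝ) → ℝ) (L : ℝ) (hL : 0 ≤ L) (α : ℝ) (hα0 : 0 < α) (hα1 : α ≤ 1)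
    (hHolder : ∀ x ∈ Set.Icc (0 : Fin d → ℝ) 1, ∀ y ∈ Set.Icc (0 : Fin d → ℝ) 1,
      |g x - g y| ≤ L * (Real.sqrt (∑ j, (x j - y j) ^ 2)) ^ α)
    (kv : Fin d → ℕ) (k : ℕ) (hk1 : 1 ≤ k)
    (hkmin : ∀ j, k ≤ kv j) (hkeq : ∃ j, kv j = k) :
    ∀ z ∈ Set.Icc (0 : Fin d → ℝ) 1,
      |g z - ∑ ν : (∀ j, Fin (kv j + 1)),
          g (fun j => (ν j : ℝ) / (kv j : ℝ)) *
            ∏ j, ((kv j).choose (ν j) : ℝ) * z j ^ (ν j : ℕ) *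
              (1 - z j) ^ (kv j - (ν j : ℕ))|
        ≤ d * L * (1 / (2 * k) + 1 / (k : ℝ) ^ 2) ^ (α / 2) :=
  bernstein_holder_rate_general d g L hL α hα0 hα1 hHolder kv k hk1 hkmin
end

section
/- Let μ be a probability measure on [0,1]^2 whose both one-dimensional marginals are the uniform distribution on [0,1]. Then the density b(z1,z2) = Σ_{ν1=1}^{k1} Σ_{ν2=1}^{k2} W_{ν1,ν2} β(z1; ν1, k1−ν1+1) β(z2; ν2, k2−ν2+1), with weights W_{ν1,ν2} = μ(((ν1−1)/k1, ν1/k1] × ((ν2−1)/k2, ν2/k2]), defines a probability measure on [0,1]^2 whose one-dimensional marginals are uniform on [0,1]. -/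
/-!
Integrating the Bernstein density in `z2` uses only that each Beta density has integral one on
`[0, 1]` and that every row of `W` sums to `1 / k1`: what remains is
`(1 / k1) ∑_ν β(z1; ν, k1 - ν + 1) = 1`, by the binomial expansion of `(z1 + (1 - z1)) ^ (k1 - 1)`.
The row sums come from the uniform first marginal of `μ`, since the cells in a row partition the
strip `cell × (0, 1]` and the uniform second marginal puts no mass outside `ℝ × (0, 1]`.
Symmetrically for columns, so both marginals of `b` are uniform, and its total mass is one.
-/

open MeasureTheory

/-- The Beta(ν, k−ν+1) density with integer parameters. -/
noncomputable def betaDens (k ν : ℕ) (z : ℝ) : ℝ :=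
  (k : ℝ) * ((k - 1).choose (ν - 1) : ℝ) * z ^ (ν - 1) * (1 - z) ^ (k - ν)

open Set
open scoped Nat

theorem integral_pow_mul_one_sub_pow (m n : ℕ) :
    ∫ x in (0 : ℝ)..1, x ^ m * (1 - x) ^ n = m ! * n ! / (m + n + 1)! := by
  have h := Complex.betaIntegral_eq_Gamma_mul_div (m + 1) (n + 1)
    (by simp only [Complex.add_re, Complex.natCast_re, Complex.one_re]; positivity)
    (by simp only [Complex.add_re, Complex.natCast_re, Complex.one_re]; positivity)
  rw [show (m + 1 + (n + 1) : ℂ) = ((m + n + 1 : ℕ) : ℂ) + 1 by push_cast; ring] at h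
  simp only [Complex.betaIntegral, add_sub_cancel_right, Complex.cpow_natCast,
    Complex.Gamma_nat_eq_factorial] at h
  norm_cast at h
  rw [intervalIntegral.integral_ofReal] at h
  apply Complex.ofReal_injective
  rw [h]
  push_cast
  rfl

theorem betaDens_nonneg (k ν : ℕ) {z : ℝ} (hz : z ∈ Icc (0 : ℝ) 1) : 0 ≤ betaDens k ν z := by
  obtain ⟨hz0, hz1⟩ := hz
  have : 0 ≤ 1 - z := sub_nonneg.mpr hz1
  unfold betaDens
  positivity

@[fun_prop]
theorem continuous_betaDens (k ν : ℕ) : Continuous (betaDens k ν) := by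
  unfold betaDens
  fun_prop

theorem integral_betaDens {k ν : ℕ} (hν : 1 ≤ ν) (hνk : ν ≤ k) :
    ∫ z in Icc (0 : ℝ) 1, betaDens k ν z = 1 := by
  obtain ⟨a, rfl⟩ := Nat.exists_eq_add_of_le' hν
  obtain ⟨b, rfl⟩ : ∃ b, k = a + b + 1 := ⟨k - (a + 1), by omega⟩
  rw [integral_Icc_eq_integral_Ioc, ← intervalIntegral.integral_of_le zero_le_one]
  simp only [betaDens, Nat.add_sub_cancel, Nat.add_sub_add_right, Nat.add_sub_cancel_left,
    mul_assoc, intervalIntegral.integral_const_mul, integral_pow_mul_one_sub_pow]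
  have hfac : ((a + b).choose a * a ! * b ! : ℝ) = (a + b)! := by
    exact_mod_cast Nat.choose_symm_add ▸ Nat.add_choose_mul_factorial_mul_factorial a b
  have hchoose : ((a + b).choose a : ℝ) ≠ 0 := by
    exact_mod_cast (Nat.choose_pos (Nat.le_add_right a b)).ne'
  rw [Nat.factorial_succ, Nat.cast_mul, ← hfac]
  field_simp

theorem sum_betaDens {k : ℕ} (hk : 0 < k) (z : ℝ) :
    ∑ ν : Fin k, betaDens k (ν + 1) z = k := by
  obtain ⟨n, rfl⟩ : ∃ n, k = n + 1 := ⟨k - 1, by omega⟩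
  have hbinom : ∑ i ∈ Finset.range (n + 1), (n.choose i : ℝ) * (z ^ i * (1 - z) ^ (n - i)) = 1 := by
    have h := add_pow z (1 - z) n
    rw [add_sub_cancel, one_pow] at h
    exact (Finset.sum_congr rfl fun _ _ => by ring).trans h.symm
  rw [Fin.sum_univ_eq_sum_range (fun i => betaDens _ (i + 1) z)]
  simp only [betaDens, Nat.add_sub_cancel, Nat.add_sub_add_right, mul_assoc, ← Finset.mul_sum,
    hbinom, mul_one]

section BernsteinDensity

variable {k1 k2 : ℕ} (W : Fin k1 → Fin k2 → ℝ)

noncomputable def bernsteinDensity (z1 z2 : ℝ) : ℝ :=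
  ∑ ν1 : Fin k1, ∑ ν2 : Fin k2, W ν1 ν2 * betaDens k1 (ν1 + 1) z1 * betaDens k2 (ν2 + 1) z2

theorem bernsteinDensity_transpose (z1 z2 : ℝ) :
    bernsteinDensity (fun ν2 ν1 => W ν1 ν2) z2 z1 = bernsteinDensity W z1 z2 := by
  rw [bernsteinDensity, bernsteinDensity, Finset.sum_comm]
  simp only [mul_right_comm]

theorem continuous_bernsteinDensity :
    Continuous fun p : ℝ × ℝ => bernsteinDensity W p.1 p.2 := by
  unfold bernsteinDensity
  fun_prop

theorem bernsteinDensity_nonneg (hW : ∀ ν1 ν2, 0 ≤ W ν1 ν2) {z1 z2 : ℝ}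
    (hz1 : z1 ∈ Icc (0 : ℝ) 1) (hz2 : z2 ∈ Icc (0 : ℝ) 1) : 0 ≤ bernsteinDensity W z1 z2 :=
  Finset.sum_nonneg fun ν1 _ => Finset.sum_nonneg fun ν2 _ =>
    mul_nonneg (mul_nonneg (hW ν1 ν2) (betaDens_nonneg _ _ hz1)) (betaDens_nonneg _ _ hz2)

theorem integral_bernsteinDensity_right (z1 : ℝ) :
    ∫ z2 in Icc (0 : ℝ) 1, bernsteinDensity W z1 z2 =
      ∑ ν1 : Fin k1, (∑ ν2 : Fin k2, W ν1 ν2) * betaDens k1 (ν1 + 1) z1 := by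
  have hint {f : ℝ → ℝ} (hf : Continuous f) : IntegrableOn f (Icc 0 1) := hf.integrableOn_Icc
  unfold bernsteinDensity
  rw [integral_finsetSum _ fun _ _ => hint (by fun_prop)]
  refine Finset.sum_congr rfl fun ν1 _ => ?_
  rw [integral_finsetSum _ fun _ _ => hint (by fun_prop), Finset.sum_mul]
  refine Finset.sum_congr rfl fun ν2 _ => ?_
  rw [integral_const_mul, integral_betaDens (by omega) (by omega), mul_one]

theorem lintegral_bernsteinDensity_right (hk1 : 0 < k1) (hW : ∀ ν1 ν2, 0 ≤ W ν1 ν2)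
    (hrow : ∀ ν1, ∑ ν2 : Fin k2, W ν1 ν2 = 1 / k1) {z1 : ℝ} (hz1 : z1 ∈ Icc (0 : ℝ) 1) :
    ∫⁻ z2 in Icc (0 : ℝ) 1, ENNReal.ofReal (bernsteinDensity W z1 z2) = 1 := by
  rw [← ofReal_integral_eq_lintegral_ofReal, integral_bernsteinDensity_right]
  · simp only [hrow, ← Finset.mul_sum, sum_betaDens hk1]
    rw [one_div_mul_cancel (Nat.cast_pos.mpr hk1).ne', ENNReal.ofReal_one]
  · exact ((continuous_bernsteinDensity W).comp (Continuous.prodMk_right z1)).integrableOn_Icc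
  · exact ae_restrict_of_forall_mem measurableSet_Icc fun z2 hz2 =>
      bernsteinDensity_nonneg W hW hz1 hz2

theorem lintegral_bernsteinDensity_left (hk2 : 0 < k2) (hW : ∀ ν1 ν2, 0 ≤ W ν1 ν2)
    (hcol : ∀ ν2, ∑ ν1 : Fin k1, W ν1 ν2 = 1 / k2) {z2 : ℝ} (hz2 : z2 ∈ Icc (0 : ℝ) 1) :
    ∫⁻ z1 in Icc (0 : ℝ) 1, ENNReal.ofReal (bernsteinDensity W z1 z2) = 1 := by
  simpa only [bernsteinDensity_transpose] using
    lintegral_bernsteinDensity_right _ hk2 (fun ν2 ν1 => hW ν1 ν2) hcol hz2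

end BernsteinDensity

section Marginals

variable {α β : Type*} [MeasurableSpace α] [MeasurableSpace β] {μ : Measure α} {ν : Measure β}
  [SFinite μ] [SFinite ν] {f : α × β → ENNReal}

theorem map_fst_withDensity_prod (hf : Measurable f) (h : ∀ᵐ x ∂μ, ∫⁻ y, f (x, y) ∂ν = 1) :
    ((μ.prod ν).withDensity f).map Prod.fst = μ := by
  ext s hs
  rw [Measure.map_apply measurable_fst hs, withDensity_apply _ (hs.preimage measurable_fst),
    ← prod_univ, setLIntegral_prod _ hf.aemeasurable, Measure.restrict_univ,
    setLIntegral_congr_fun_ae hs (h.mono fun x hx _ => hx), setLIntegral_one]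

theorem map_snd_withDensity_prod (hf : Measurable f) (h : ∀ᵐ y ∂ν, ∫⁻ x, f (x, y) ∂μ = 1) :
    ((μ.prod ν).withDensity f).map Prod.snd = ν := by
  ext t ht
  rw [Measure.map_apply measurable_snd ht, withDensity_apply _ (ht.preimage measurable_snd),
    ← univ_prod, setLIntegral_prod_symm _ hf.aemeasurable, Measure.restrict_univ,
    setLIntegral_congr_fun_ae ht (h.mono fun y hy _ => hy), setLIntegral_one]

end Marginals

/-- Cells are indexed from `0`: `gridCell k ν` is the paper's cell `ν + 1`. -/
noncomputable def gridCell (k ν : ℕ) : Set ℝ := Ioc ((ν : ℝ) / k) (((ν + 1 : ℕ) : ℝ) / k)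

theorem measurableSet_gridCell (k ν : ℕ) : MeasurableSet (gridCell k ν) := measurableSet_Ioc

theorem pairwise_disjoint_gridCell (k : ℕ) :
    Pairwise (Function.onFun Disjoint fun ν : Fin k => gridCell k ν) :=
  have hmono : Monotone fun ν : ℕ => (ν : ℝ) / k := fun _ _ h => by dsimp only; gcongr
  fun i j hij => hmono.pairwise_disjoint_on_Ioc_succ (Fin.val_injective.ne hij)

theorem iUnion_gridCell {k : ℕ} (hk : 0 < k) : ⋃ ν : Fin k, gridCell k ν = Ioc 0 1 := by
  have hk' : (0 : ℝ) < k := Nat.cast_pos.mpr hk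
  ext z
  simp only [mem_iUnion, gridCell, mem_Ioc]
  constructor
  · rintro ⟨ν, hlo, hhi⟩
    refine ⟨(div_nonneg (Nat.cast_nonneg _) hk'.le).trans_lt hlo, hhi.trans ?_⟩
    rw [div_le_one hk']
    exact_mod_cast ν.isLt
  · rintro ⟨hz0, hz1⟩
    have hzk : 0 < z * k := by positivity
    obtain ⟨ν, hν⟩ : ∃ ν, ⌈z * k⌉₊ = ν + 1 := Nat.exists_eq_add_one.mpr (Nat.ceil_pos.mpr hzk)
    have hνk : ν + 1 ≤ k := hν ▸ Nat.ceil_le.mpr (by nlinarith)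
    refine ⟨⟨ν, hνk⟩, ?_, ?_⟩
    · rw [div_lt_iff₀ hk']
      have := Nat.ceil_lt_add_one hzk.le
      rw [hν] at this
      push_cast at this
      linarith
    · rw [le_div_iff₀ hk', ← hν]
      exact Nat.le_ceil _

theorem volume_gridCell (k ν : ℕ) : volume (gridCell k ν) = ENNReal.ofReal (1 / k) := by
  rw [gridCell, Real.volume_Ioc]
  congr 1
  push_cast
  ring

theorem gridCell_subset_Icc {k : ℕ} (ν : Fin k) : gridCell k ν ⊆ Icc 0 1 :=
  (subset_iUnion (fun ν : Fin k => gridCell k ν) ν).trans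
    (iUnion_gridCell ν.pos).subset |>.trans Ioc_subset_Icc_self

theorem sum_measure_prod_gridCell {α : Type*} [MeasurableSpace α] {μ : Measure (α × ℝ)} {k : ℕ}
    (hk : 0 < k) (hsnd : μ.map Prod.snd = volume.restrict (Icc 0 1)) {A : Set α}
    (hA : MeasurableSet A) : ∑ ν : Fin k, μ (A ×ˢ gridCell k ν) = μ.map Prod.fst A := by
  have hnull : μ (Prod.snd ⁻¹' Ioc 0 1)ᶜ = 0 := by
    rw [← preimage_compl, ← Measure.map_apply measurable_snd measurableSet_Ioc.compl, hsnd,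
      ← Measure.restrict_congr_set Ioc_ae_eq_Icc]
    exact mem_ae_iff.mp (ae_restrict_mem measurableSet_Ioc)
  rw [← tsum_fintype (L := .unconditional _), ← measure_iUnion, ← prod_iUnion,
    iUnion_gridCell hk, prod_eq, measure_inter_conull hnull, Measure.map_apply measurable_fst hA]
  · exact fun i j hij => disjoint_prod.mpr (Or.inr (pairwise_disjoint_gridCell k hij))
  · exact fun ν => hA.prod (measurableSet_gridCell k ν)

section CellMasses

variable {μ : Measure (ℝ × ℝ)} [IsFiniteMeasure μ] {k1 k2 : ℕ}

theorem sum_toReal_measure_gridCell_right (hm1 : μ.map Prod.fst = volume.restrict (Icc 0 1))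
    (hm2 : μ.map Prod.snd = volume.restrict (Icc 0 1)) (hk2 : 0 < k2) (ν1 : Fin k1) :
    ∑ ν2 : Fin k2, (μ (gridCell k1 ν1 ×ˢ gridCell k2 ν2)).toReal = 1 / k1 := by
  rw [← ENNReal.toReal_sum fun _ _ => measure_ne_top μ _,
    sum_measure_prod_gridCell hk2 hm2 (measurableSet_gridCell _ _), hm1,
    Measure.restrict_apply (measurableSet_gridCell _ _),
    inter_eq_left.mpr (gridCell_subset_Icc ν1), volume_gridCell,
    ENNReal.toReal_ofReal (by positivity)]

theorem sum_toReal_measure_gridCell_left (hm1 : μ.map Prod.fst = volume.restrict (Icc 0 1))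
    (hm2 : μ.map Prod.snd = volume.restrict (Icc 0 1)) (hk1 : 0 < k1) (ν2 : Fin k2) :
    ∑ ν1 : Fin k1, (μ (gridCell k1 ν1 ×ˢ gridCell k2 ν2)).toReal = 1 / k2 := by
  have h := sum_toReal_measure_gridCell_right (μ := μ.map Prod.swap)
    (by rwa [Measure.map_map measurable_fst measurable_swap])
    (by rwa [Measure.map_map measurable_snd measurable_swap]) hk1 ν2
  simpa only [Measure.map_apply measurable_swap
    ((measurableSet_gridCell _ _).prod (measurableSet_gridCell _ _)), preimage_swap_prod] using h

end CellMasses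

theorem bernstein_copula_measure_general (k1 k2 : ℕ) (hk1 : 0 < k1) (hk2 : 0 < k2)
    (μ : Measure (ℝ × ℝ)) [IsProbabilityMeasure μ]
    (hm1 : μ.map Prod.fst = volume.restrict (Set.Icc (0 : ℝ) 1))
    (hm2 : μ.map Prod.snd = volume.restrict (Set.Icc (0 : ℝ) 1))
    (W : Fin k1 → Fin k2 → ℝ)
    (hW : ∀ ν1 ν2, W ν1 ν2 =
      (μ (Set.Ioc ((ν1 : ℝ) / k1) (((ν1 : ℕ) + 1 : ℕ) / (k1 : ℝ)) ×ˢ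
          Set.Ioc ((ν2 : ℝ) / k2) (((ν2 : ℕ) + 1 : ℕ) / (k2 : ℝ)))).toReal)
    (b : ℝ → ℝ → ℝ)
    (hb : ∀ z1 z2, b z1 z2 = ∑ ν1 : Fin k1, ∑ ν2 : Fin k2,
      W ν1 ν2 * betaDens k1 ((ν1 : ℕ) + 1) z1 * betaDens k2 ((ν2 : ℕ) + 1) z2) :
    IsProbabilityMeasure
        ((volume.restrict (Set.Icc 0 1 ×ˢ Set.Icc (0 : ℝ) 1)).withDensity
          (fun p => ENNReal.ofReal (b p.1 p.2))) ∧
    ((volume.restrict (Set.Icc 0 1 ×ˢ Set.Icc (0 : ℝ) 1)).withDensity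
          (fun p => ENNReal.ofReal (b p.1 p.2))).map Prod.fst =
        volume.restrict (Set.Icc (0 : ℝ) 1) ∧
    ((volume.restrict (Set.Icc 0 1 ×ˢ Set.Icc (0 : ℝ) 1)).withDensity
          (fun p => ENNReal.ofReal (b p.1 p.2))).map Prod.snd =
        volume.restrict (Set.Icc (0 : ℝ) 1) := by
  obtain rfl : b = bernsteinDensity W := funext fun z1 => funext (hb z1)
  have hW0 : ∀ ν1 ν2, 0 ≤ W ν1 ν2 := fun ν1 ν2 => hW ν1 ν2 ▸ ENNReal.toReal_nonneg
  have hrow : ∀ ν1, ∑ ν2 : Fin k2, W ν1 ν2 = 1 / k1 := fun ν1 => by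
    simp only [hW]
    exact sum_toReal_measure_gridCell_right hm1 hm2 hk2 ν1
  have hcol : ∀ ν2, ∑ ν1 : Fin k1, W ν1 ν2 = 1 / k2 := fun ν2 => by
    simp only [hW]
    exact sum_toReal_measure_gridCell_left hm1 hm2 hk1 ν2
  have hf : Measurable fun p : ℝ × ℝ => ENNReal.ofReal (bernsteinDensity W p.1 p.2) :=
    ENNReal.measurable_ofReal.comp (continuous_bernsteinDensity W).measurable
  have hunif : IsProbabilityMeasure (volume.restrict (Icc (0 : ℝ) 1)) := ⟨by simp⟩
  have hrowInt : ∀ᵐ z1 ∂volume.restrict (Icc (0 : ℝ) 1),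
      ∫⁻ z2 in Icc (0 : ℝ) 1, ENNReal.ofReal (bernsteinDensity W z1 z2) = 1 :=
    ae_restrict_of_forall_mem measurableSet_Icc fun z1 =>
      lintegral_bernsteinDensity_right W hk1 hW0 hrow
  have hcolInt : ∀ᵐ z2 ∂volume.restrict (Icc (0 : ℝ) 1),
      ∫⁻ z1 in Icc (0 : ℝ) 1, ENNReal.ofReal (bernsteinDensity W z1 z2) = 1 :=
    ae_restrict_of_forall_mem measurableSet_Icc fun z2 =>
      lintegral_bernsteinDensity_left W hk2 hW0 hcol
  have hfst := map_fst_withDensity_prod hf hrowInt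
  rw [Measure.volume_eq_prod, ← Measure.prod_restrict]
  exact ⟨(Measure.isProbabilityMeasure_map_iff measurable_fst.aemeasurable).mp (by rwa [hfst]),
    hfst, map_snd_withDensity_prod hf hcolInt⟩

/-- the Bernstein copula density built from the grid-cell masses of a
probability measure on [0,1]² with uniform marginals defines a probability measure
on [0,1]² with uniform marginals. -/
theorem bernstein_copula_measure (k1 k2 : ℕ) (hk1 : 0 < k1) (hk2 : 0 < k2)
    (μ : Measure (ℝ × ℝ)) [IsProbabilityMeasure μ]
    (hsupp : μ (Set.Icc 0 1 ×ˢ Set.Icc (0 : ℝ) 1) = 1)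
    (hm1 : μ.map Prod.fst = volume.restrict (Set.Icc (0 : ℝ) 1))
    (hm2 : μ.map Prod.snd = volume.restrict (Set.Icc (0 : ℝ) 1))
    (W : Fin k1 → Fin k2 → ℝ)
    (hW : ∀ ν1 ν2, W ν1 ν2 =
      (μ (Set.Ioc ((ν1 : ℝ) / k1) (((ν1 : ℕ) + 1 : ℕ) / (k1 : ℝ)) ×ˢ
          Set.Ioc ((ν2 : ℝ) / k2) (((ν2 : ℕ) + 1 : ℕ) / (k2 : ℝ)))).toReal)
    (b : ℝ → ℝ → ℝ)
    (hb : ∀ z1 z2, b z1 z2 = ∑ ν1 : Fin k1, ∑ ν2 : Fin k2,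
      W ν1 ν2 * betaDens k1 ((ν1 : ℕ) + 1) z1 * betaDens k2 ((ν2 : ℕ) + 1) z2) :
    IsProbabilityMeasure
        ((volume.restrict (Set.Icc 0 1 ×ˢ Set.Icc (0 : ℝ) 1)).withDensity
          (fun p => ENNReal.ofReal (b p.1 p.2))) ∧
    ((volume.restrict (Set.Icc 0 1 ×ˢ Set.Icc (0 : ℝ) 1)).withDensity
          (fun p => ENNReal.ofReal (b p.1 p.2))).map Prod.fst =
        volume.restrict (Set.Icc (0 : ℝ) 1) ∧
    ((volume.restrict (Set.Icc 0 1 ×ˢ Set.Icc (0 : ℝ) 1)).withDensity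
          (fun p => ENNReal.ofReal (b p.1 p.2))).map Prod.snd =
        volume.restrict (Set.Icc (0 : ℝ) 1) :=
  bernstein_copula_measure_general k1 k2 hk1 hk2 μ hm1 hm2 W hW b hb
end

section
/- Connectivity by rectangle exchanges: for any two k×k nonnegative matrices W and V with all row and column sums equal to 1/k, there exists a finite sequence of rectangle exchanges transforming W into V. -/
/-! Both matrices can be driven to `c • 1`, where `c` is the common margin, and on nonnegative
matrices an exchange can be undone, so `W` reaches `V` through `c • 1`. While `W d d < c` there
are positive cells `(d, b)` and `(a, d)` off the diagonal; moving `min (W d b) (W a d)` from them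
onto `(d, d)` and `(a, b)` never lowers a diagonal entry and empties one of the two cells. Since
`(a, b)` lies off row and column `d`, the positive off-diagonal cells of that cross strictly
decrease, so finitely many moves make `W d d = c`. Once the whole diagonal equals `c`, the margins
force every other entry to vanish. -/

/-- One rectangle exchange step relating two `k × k` weight matrices. -/
def RectExchangeStep (k : ℕ) (W W' : Fin k → Fin k → ℝ) : Prop :=
  ∃ (a1 a2 b1 b2 : Fin k) (ε : ℝ), a1 ≠ a2 ∧ b1 ≠ b2 ∧
    max (-W a1 b2) (-W a2 b1) ≤ ε ∧ ε ≤ min (W a1 b1) (W a2 b2) ∧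
    ∀ i j, W' i j = W i j + ε *
      (((if i = a1 ∧ j = b2 then (1 : ℝ) else 0) + (if i = a2 ∧ j = b1 then 1 else 0))
        - ((if i = a1 ∧ j = b1 then 1 else 0) + (if i = a2 ∧ j = b2 then 1 else 0)))

open Finset Relation

structure IsScaledDoublyStochastic {n : Type*} [Fintype n] (c : ℝ) (W : n → n → ℝ) :
    Prop where
  nonneg : ∀ i j, 0 ≤ W i j
  row_sum : ∀ i, ∑ j, W i j = c
  col_sum : ∀ j, ∑ i, W i j = c

namespace IsScaledDoublyStochastic

variable {n : Type*} [Fintype n] {c : ℝ} {W V : n → n → ℝ}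

theorem transpose (hW : IsScaledDoublyStochastic c W) :
    IsScaledDoublyStochastic c fun i j => W j i :=
  ⟨fun i j => hW.nonneg j i, hW.col_sum, hW.row_sum⟩

theorem apply_le (hW : IsScaledDoublyStochastic c W) (i j : n) : W i j ≤ c :=
  hW.row_sum i ▸ single_le_sum (fun j _ => hW.nonneg i j) (mem_univ j)

theorem diag_eq_iff_row_eq_zero (hW : IsScaledDoublyStochastic c W) (d : n) :
    W d d = c ↔ ∀ j ≠ d, W d j = 0 := by
  constructor
  · intro hd j hjd
    by_contra hj
    have := single_lt_sum hjd (mem_univ d) (mem_univ j) ((hW.nonneg d j).lt_of_ne' hj)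
      fun j _ _ => hW.nonneg d j
    rw [hW.row_sum] at this
    exact this.ne hd
  · intro h
    rw [← hW.row_sum d, sum_eq_single d (fun j _ => h j) (by simp)]

theorem exists_row_pos (hW : IsScaledDoublyStochastic c W) {d : n} (hd : W d d ≠ c) :
    ∃ j ≠ d, 0 < W d j := by
  obtain ⟨j, hjd, hj⟩ : ∃ j ≠ d, W d j ≠ 0 := by
    simpa using mt (hW.diag_eq_iff_row_eq_zero d).2 hd
  exact ⟨j, hjd, (hW.nonneg d j).lt_of_ne' hj⟩

theorem exists_col_pos (hW : IsScaledDoublyStochastic c W) {d : n} (hd : W d d ≠ c) :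
    ∃ i ≠ d, 0 < W i d :=
  hW.transpose.exists_row_pos hd

theorem ext_of_diag (hW : IsScaledDoublyStochastic c W) (hV : IsScaledDoublyStochastic c V)
    (hWd : ∀ i, W i i = c) (hVd : ∀ i, V i i = c) : W = V := by
  funext i j
  by_cases hij : j = i
  · rw [hij, hWd, hVd]
  · rw [(hW.diag_eq_iff_row_eq_zero i).1 (hWd i) j hij,
      (hV.diag_eq_iff_row_eq_zero i).1 (hVd i) j hij]

end IsScaledDoublyStochastic

namespace RectExchangeStep

variable {k : ℕ} {W W' : Fin k → Fin k → ℝ}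

theorem nonneg (h : RectExchangeStep k W W') (hW : ∀ i j, 0 ≤ W i j) (i j : Fin k) :
    0 ≤ W' i j := by
  obtain ⟨a1, a2, b1, b2, ε, -, -, hlo, hhi, hW'⟩ := h
  simp only [max_le_iff, le_min_iff] at hlo hhi
  have := hW i j
  rw [hW']
  split_ifs <;> simp_all <;> linarith

theorem row_sum_eq (h : RectExchangeStep k W W') (i : Fin k) :
    ∑ j, W' i j = ∑ j, W i j := by
  obtain ⟨a1, a2, b1, b2, ε, -, -, -, -, hW'⟩ := h
  simp only [hW', sum_add_distrib, ← mul_sum, sum_sub_distrib, ite_and, sum_ite_irrel,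
    sum_ite_eq', mem_univ, if_true, sum_const_zero]
  ring

theorem col_sum_eq (h : RectExchangeStep k W W') (j : Fin k) :
    ∑ i, W' i j = ∑ i, W i j := by
  obtain ⟨a1, a2, b1, b2, ε, -, -, -, -, hW'⟩ := h
  simp only [hW', sum_add_distrib, ← mul_sum, sum_sub_distrib, ite_and,
    sum_ite_eq', mem_univ, if_true]
  ring

theorem isScaledDoublyStochastic {c : ℝ} (h : RectExchangeStep k W W')
    (hW : IsScaledDoublyStochastic c W) : IsScaledDoublyStochastic c W' :=
  ⟨h.nonneg hW.nonneg, fun i => (h.row_sum_eq i).trans (hW.row_sum i),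
    fun j => (h.col_sum_eq j).trans (hW.col_sum j)⟩

theorem symm (h : RectExchangeStep k W W') (hW : ∀ i j, 0 ≤ W i j) :
    RectExchangeStep k W' W := by
  obtain ⟨a1, a2, b1, b2, ε, ha, hb, hlo, hhi, hW'⟩ := h
  refine ⟨a1, a2, b1, b2, -ε, ha, hb, ?_, ?_, fun i j => by rw [hW' i j]; ring⟩
  all_goals simp [hW', ha, hb, ha.symm, hb.symm, hW]

end RectExchangeStep

theorem nonneg_of_reflTransGen_rectExchangeStep {k : ℕ} {W V : Fin k → Fin k → ℝ}
    (h : ReflTransGen (RectExchangeStep k) W V) (hW : ∀ i j, 0 ≤ W i j) :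
    ∀ i j, 0 ≤ V i j := by
  induction h with
  | refl => exact hW
  | tail _ hUV ih => exact hUV.nonneg ih

theorem reflTransGen_rectExchangeStep_symm {k : ℕ} {W V : Fin k → Fin k → ℝ}
    (h : ReflTransGen (RectExchangeStep k) W V) (hW : ∀ i j, 0 ≤ W i j) :
    ReflTransGen (RectExchangeStep k) V W := by
  induction h with
  | refl => exact .refl
  | tail hWU hUV ih =>
    exact .head (hUV.symm (nonneg_of_reflTransGen_rectExchangeStep hWU hW)) ih

section Pivot

variable {n : Type*} [DecidableEq n] {W : n → n → ℝ} {d a b : n} {m : ℝ}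

/-- The rectangle exchange on rows `d, a` and columns `d, b` with `ε = -m`. -/
def pivot (W : n → n → ℝ) (d a b : n) (m : ℝ) : n → n → ℝ := fun i j =>
  W i j + m * (((if i = d ∧ j = d then 1 else 0) + (if i = a ∧ j = b then 1 else 0))
    - ((if i = d ∧ j = b then 1 else 0) + (if i = a ∧ j = d then 1 else 0)))

theorem pivot_le (hm : 0 ≤ m) {i j : n} (hdd : (i, j) ≠ (d, d)) (hab : (i, j) ≠ (a, b)) :
    pivot W d a b m i j ≤ W i j := by
  simp only [ne_eq, Prod.mk.injEq] at hdd hab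
  simp only [pivot, if_neg hdd, if_neg hab]
  split_ifs <;> linarith

theorem le_pivot (hm : 0 ≤ m) {i j : n} (hdb : (i, j) ≠ (d, b)) (had : (i, j) ≠ (a, d)) :
    W i j ≤ pivot W d a b m i j := by
  simp only [ne_eq, Prod.mk.injEq] at hdb had
  simp only [pivot, if_neg hdb, if_neg had]
  split_ifs <;> linarith

theorem diag_le_pivot (hm : 0 ≤ m) (had : a ≠ d) (hbd : b ≠ d) (i : n) :
    W i i ≤ pivot W d a b m i i :=
  le_pivot hm (by rintro ⟨⟩; exact hbd rfl) (by rintro ⟨⟩; exact had rfl)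

theorem pivot_apply_row (had : a ≠ d) (hbd : b ≠ d) : pivot W d a b m d b = W d b - m := by
  simp [pivot, had.symm, hbd, sub_eq_add_neg]

theorem pivot_apply_col (had : a ≠ d) (hbd : b ≠ d) : pivot W d a b m a d = W a d - m := by
  simp [pivot, had, hbd.symm, sub_eq_add_neg]

noncomputable def crossSupport [Fintype n] (W : n → n → ℝ) (d : n) : Finset (n × n) :=
  univ.filter fun p => (p.1 = d ∨ p.2 = d) ∧ p ≠ (d, d) ∧ 0 < W p.1 p.2

theorem card_crossSupport_pivot_lt [Fintype n] (had : a ≠ d) (hbd : b ≠ d) (hb : 0 < W d b)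
    (ha : 0 < W a d) :
    #(crossSupport (pivot W d a b (min (W d b) (W a d))) d) < #(crossSupport W d) := by
  have hm : 0 ≤ min (W d b) (W a d) := le_min hb.le ha.le
  refine card_lt_card ((ssubset_iff_of_subset ?_).2 ?_)
  · rintro ⟨i, j⟩
    simp only [crossSupport, mem_filter, mem_univ, true_and]
    rintro ⟨hcross, hdd, hpos⟩
    refine ⟨hcross, hdd, hpos.trans_le (pivot_le hm hdd ?_)⟩
    rintro ⟨rfl, rfl⟩
    tauto
  · rcases min_choice (W d b) (W a d) with hmin | hmin
    · refine ⟨(d, b), ?_, ?_⟩ <;> simp [crossSupport, hbd, hb, pivot_apply_row had hbd, hmin]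
    · refine ⟨(a, d), ?_, ?_⟩ <;> simp [crossSupport, had, ha, pivot_apply_col had hbd, hmin]

end Pivot

theorem rectExchangeStep_pivot {k : ℕ} {W : Fin k → Fin k → ℝ} {d a b : Fin k} {m : ℝ}
    (hW : ∀ i j, 0 ≤ W i j) (had : a ≠ d) (hbd : b ≠ d) (hm : 0 ≤ m)
    (hmW : m ≤ min (W d b) (W a d)) : RectExchangeStep k W (pivot W d a b m) := by
  refine ⟨d, a, d, b, -m, had.symm, hbd.symm, ?_, ?_, fun i j => by simp only [pivot]; ring⟩
  · rwa [max_neg_neg, neg_le_neg_iff]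
  · exact le_min (by linarith [hW d d]) (by linarith [hW a b])

namespace IsScaledDoublyStochastic

variable {k : ℕ} {c : ℝ}

theorem exists_reflTransGen_diag_eq {W : Fin k → Fin k → ℝ}
    (hW : IsScaledDoublyStochastic c W) (d : Fin k) :
    ∃ W', ReflTransGen (RectExchangeStep k) W W' ∧ IsScaledDoublyStochastic c W' ∧
      W' d d = c ∧ ∀ i, W i i ≤ W' i i := by
  by_cases hd : W d d = c
  · exact ⟨W, .refl, hW, hd, fun _ => le_rfl⟩
  obtain ⟨b, hbd, hb⟩ := hW.exists_row_pos hd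
  obtain ⟨a, had, ha⟩ := hW.exists_col_pos hd
  have hm : 0 ≤ min (W d b) (W a d) := le_min hb.le ha.le
  have hstep := rectExchangeStep_pivot hW.nonneg had hbd hm le_rfl
  -- the termination measure decreases along the recursive call
  have hlt := card_crossSupport_pivot_lt had hbd hb ha
  obtain ⟨W', hreach, hW', hd', hdiag⟩ :=
    (hstep.isScaledDoublyStochastic hW).exists_reflTransGen_diag_eq d
  exact ⟨W', .head hstep hreach, hW', hd',
    fun i => (diag_le_pivot hm had hbd i).trans (hdiag i)⟩
termination_by #(crossSupport W d)

theorem exists_reflTransGen_forall_diag_eq {W : Fin k → Fin k → ℝ}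
    (hW : IsScaledDoublyStochastic c W) (s : Finset (Fin k)) :
    ∃ W', ReflTransGen (RectExchangeStep k) W W' ∧ IsScaledDoublyStochastic c W' ∧
      ∀ i ∈ s, W' i i = c := by
  induction s using Finset.induction_on with
  | empty => exact ⟨W, .refl, hW, by simp⟩
  | insert d s _ ih =>
    obtain ⟨W', hWW', hW', hs⟩ := ih
    obtain ⟨W'', hW'W'', hW'', hd, hdiag⟩ := hW'.exists_reflTransGen_diag_eq d
    refine ⟨W'', hWW'.trans hW'W'', hW'', ?_⟩
    simp only [mem_insert, forall_eq_or_imp]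
    exact ⟨hd, fun i hi => le_antisymm (hW''.apply_le i i) (hs i hi ▸ hdiag i)⟩

end IsScaledDoublyStochastic

theorem rectangle_exchange_connectivity_general (k : ℕ)
    (W V : Fin k → Fin k → ℝ)
    (hWpos : ∀ i j, 0 ≤ W i j) (hVpos : ∀ i j, 0 ≤ V i j)
    (hWrow : ∀ i, ∑ j, W i j = 1 / k) (hWcol : ∀ j, ∑ i, W i j = 1 / k)
    (hVrow : ∀ i, ∑ j, V i j = 1 / k) (hVcol : ∀ j, ∑ i, V i j = 1 / k) :
    Relation.ReflTransGen (RectExchangeStep k) W V := by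
  obtain ⟨W', hWW', hW', hW'diag⟩ :=
    IsScaledDoublyStochastic.exists_reflTransGen_forall_diag_eq ⟨hWpos, hWrow, hWcol⟩ univ
  obtain ⟨V', hVV', hV', hV'diag⟩ :=
    IsScaledDoublyStochastic.exists_reflTransGen_forall_diag_eq ⟨hVpos, hVrow, hVcol⟩ univ
  have hW'V' : W' = V' := hW'.ext_of_diag hV' (by simpa using hW'diag) (by simpa using hV'diag)
  exact hWW'.trans (hW'V' ▸ reflTransGen_rectExchangeStep_symm hVV' hVpos)

/-- any two grid-uniform copula weight matrices are connected by a
finite sequence of rectangle exchanges. -/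
theorem rectangle_exchange_connectivity (k : ℕ) (hk : 0 < k)
    (W V : Fin k → Fin k → ℝ)
    (hWpos : ∀ i j, 0 ≤ W i j) (hVpos : ∀ i j, 0 ≤ V i j)
    (hWrow : ∀ i, ∑ j, W i j = 1 / k) (hWcol : ∀ j, ∑ i, W i j = 1 / k)
    (hVrow : ∀ i, ∑ j, V i j = 1 / k) (hVcol : ∀ j, ∑ i, V i j = 1 / k) :
    Relation.ReflTransGen (RectExchangeStep k) W V :=
  rectangle_exchange_connectivity_general k W V hWpos hVpos hWrow hWcol hVrow hVcol
end
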